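/- For every ε ∈ (0, p-1) there exists C(ε) > 0 such that for all s ≥ 1 and all z ∈ ℝ, e^{-(p+1)s/(p-1)} s^{2a/(p-1)} F(φ(s) z) ≤ C(ε) + C |z|^{p+1+ε}, and |z|^{p+1-ε} ≤ C e^{-(p+1)s/(p-1)} s^{2a/(p-1)} F(φ(s) z) + C(ε). -/

import Mathlib

open Real Filter MeasureTheory

noncomputable def f7 (p a u : ℝ) : ℝ := |u| ^ (p - 1) * u * Real.log (2 + u ^ 2) ^ a

noncomputable def F7 (p a u : ℝ) : ℝ := ∫ v in (0:ℝ)..u, f7 p a v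

noncomputable def phi7 (p a s : ℝ) : ℝ := Real.exp (s / (p - 1)) * s ^ (-(a / (p - 1)))

/-! ### Auxiliary lemmas -/

lemma log2pos' (u : ℝ) : (0:ℝ) < Real.log (2 + u ^ 2) := by
  apply Real.log_pos; nlinarith [sq_nonneg u]

lemma f7_neg' (p a u : ℝ) : f7 p a (-u) = - f7 p a u := by
  simp [f7]

lemma F7_even' (p a u : ℝ) : F7 p a (-u) = F7 p a u := by
  unfold F7
  have h : ∫ v in (0:ℝ)..u, f7 p a v = ∫ v in (0:ℝ)..u, -f7 p a (-v) := by
    apply intervalIntegral.integral_congr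
    intro x _
    show f7 p a x = -f7 p a (-x)
    rw [f7_neg']; ring
  rw [h, intervalIntegral.integral_comp_neg fun v => -f7 p a v]
  simp [intervalIntegral.integral_symm (0:ℝ)]

lemma phi_pos' (p a s : ℝ) (hs : 0 < s) : 0 < phi7 p a s := by
  unfold phi7; positivity

lemma phi_rpow' (p a s : ℝ) (hs : 0 < s) (x : ℝ) :
    (phi7 p a s) ^ x = Real.exp (s / (p-1) * x + -(a / (p-1)) * x * Real.log s) := by
  unfold phi7
  rw [Real.mul_rpow (Real.exp_nonneg _) (Real.rpow_nonneg hs.le _),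
    ← Real.exp_log (x := Real.exp (s/(p-1)) ^ x) (by positivity),
    Real.log_rpow (Real.exp_pos _), Real.log_exp,
    ← Real.rpow_mul hs.le,
    Real.rpow_def_of_pos hs, ← Real.exp_add]
  ring_nf

lemma log_phi' (p a s : ℝ) (hs : 0 < s) :
    Real.log (phi7 p a s) = s / (p-1) + -(a/(p-1)) * Real.log s := by
  unfold phi7
  rw [Real.log_mul (Real.exp_ne_zero _) (by positivity), Real.log_exp,
    Real.log_rpow hs]

/-- The scaling identity. -/
lemma key_id' (p a : ℝ) (hp : 1 < p) (s : ℝ) (hs : 1 ≤ s) (z : ℝ) :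
    Real.exp (-((p + 1) * s) / (p - 1)) * s ^ (2 * a / (p - 1)) * F7 p a (phi7 p a s * z)
    = ∫ w in (0:ℝ)..z, |w| ^ (p-1) * w * (Real.log (2 + (phi7 p a s * w)^2) / s) ^ a := by
  have hs0 : 0 < s := lt_of_lt_of_le one_pos hs
  have hq : p - 1 ≠ 0 := ne_of_gt (by linarith)
  set c := phi7 p a s with hcdef
  have hc : 0 < c := phi_pos' p a s hs0
  have hsa : (0:ℝ) < s ^ a := Real.rpow_pos_of_pos hs0 a
  have h1 : F7 p a (c*z) = c * ∫ w in (0:ℝ)..z, f7 p a (c*w) := by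
    have h := intervalIntegral.smul_integral_comp_mul_left (f7 p a) c (a := 0) (b := z)
    rw [mul_zero] at h
    unfold F7
    rw [← h, smul_eq_mul]
  have h2 : ∀ w : ℝ, f7 p a (c*w)
      = (c^(p-1) * c * s^a) * (|w|^(p-1) * w * (Real.log (2 + (c*w)^2)/s)^a) := by
    intro w
    unfold f7
    have hL : 0 < Real.log (2 + (c*w)^2) := log2pos' _
    rw [abs_mul, abs_of_pos hc, Real.mul_rpow hc.le (abs_nonneg w),
        Real.div_rpow hL.le hs0.le]
    field_simp
  have h3 : (∫ w in (0:ℝ)..z, f7 p a (c*w))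
      = (c^(p-1) * c * s^a) * ∫ w in (0:ℝ)..z, |w|^(p-1) * w * (Real.log (2 + (c*w)^2)/s)^a := by
    rw [← intervalIntegral.integral_const_mul]
    apply intervalIntegral.integral_congr
    intro x _
    exact h2 x
  rw [h1, h3]
  have hscal : Real.exp (-((p + 1) * s) / (p - 1)) * s ^ (2 * a / (p - 1)) * (c * ((c^(p-1) * c * s^a))) = 1 := by
    rw [phi_rpow' p a s hs0 (p-1)]
    have hc1 : c = Real.exp (s / (p-1) * 1 + -(a / (p-1)) * 1 * Real.log s) := by
      rw [← phi_rpow' p a s hs0 1, Real.rpow_one]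
    rw [hc1, Real.rpow_def_of_pos hs0 (2*a/(p-1)), Real.rpow_def_of_pos hs0 a,
      ← Real.exp_add, ← Real.exp_add, ← Real.exp_add, ← Real.exp_add, ← Real.exp_add,
      Real.exp_eq_one_iff]
    field_simp
    ring
  calc Real.exp (-((p + 1) * s) / (p - 1)) * s ^ (2 * a / (p - 1)) *
      (c * ((c^(p-1) * c * s^a) * ∫ w in (0:ℝ)..z, |w|^(p-1) * w * (Real.log (2 + (c*w)^2)/s)^a))
      = (Real.exp (-((p + 1) * s) / (p - 1)) * s ^ (2 * a / (p - 1)) * (c * (c^(p-1) * c * s^a)))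
        * ∫ w in (0:ℝ)..z, |w|^(p-1) * w * (Real.log (2 + (c*w)^2)/s)^a := by ring
    _ = _ := by rw [hscal, one_mul]

lemma log_one_add_sq' (w : ℝ) : Real.log (1 + w^2) ≤ Real.log 2 + 2*|Real.log w| := by
  rcases le_or_gt (1+w^2) 2 with h | h
  · have h1 : Real.log (1+w^2) ≤ Real.log 2 :=
      Real.log_le_log (by positivity) h
    have := abs_nonneg (Real.log w); linarith
  · have hw : 1 < |w| := by
      rcases le_or_gt |w| 1 with h2 | h2
      · nlinarith [sq_abs w, abs_nonneg w]
      · exact h2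
    have hw0 : w ≠ 0 := by intro h0; rw [h0, abs_zero] at hw; linarith
    have h1 : Real.log (1+w^2) ≤ Real.log (2*w^2) := by
      apply Real.log_le_log (by positivity)
      nlinarith [sq_abs w]
    have h2 : Real.log (2*w^2) = Real.log 2 + 2*Real.log |w| := by
      rw [Real.log_mul two_ne_zero (by positivity), Real.log_pow, Real.log_abs]
      push_cast; ring
    have h3 : Real.log |w| ≤ |Real.log w| := by
      rw [Real.log_abs]; exact le_abs_self _
    linarith

lemma L_upper' (p a : ℝ) (hp : 1 < p) :
    ∀ s ≥ (1:ℝ), ∀ w : ℝ, 0 < w →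
      Real.log (2 + (phi7 p a s * w)^2)
        ≤ (3*Real.log 2 + 2*(1+|a|)/(p-1) + 2) * s * (1 + |Real.log w|) := by
  intro s hs w hw
  have hs0 : 0 < s := lt_of_lt_of_le one_pos hs
  have hq : (0:ℝ) < p - 1 := by linarith
  set c := phi7 p a s with hcdef
  have hc : 0 < c := by rw [hcdef]; unfold phi7; positivity
  have hls : 0 ≤ Real.log s := Real.log_nonneg hs
  have hlss : Real.log s ≤ s := (Real.log_le_sub_one_of_pos hs0).trans (by linarith)
  have hlogcle : Real.log c ≤ (1+|a|)*s/(p-1) := by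
    have h1 : -a * Real.log s ≤ |a| * s := by
      nlinarith [neg_le_abs a, mul_nonneg (by linarith [neg_le_abs a] : (0:ℝ) ≤ |a| + a) hls,
        mul_nonneg (abs_nonneg a) (by linarith : 0 ≤ s - Real.log s)]
    have h2 : Real.log c = (s + -a * Real.log s)/(p-1) := by
      rw [hcdef, log_phi' p a s hs0]; ring
    rw [h2, div_le_div_iff_of_pos_right hq]
    nlinarith
  have hsplit : Real.log (2 + (c*w)^2) ≤ Real.log 2 + Real.log (1+c^2) + Real.log (1+w^2) := by
    have hle : 2 + (c*w)^2 ≤ 2 * (1+c^2) * (1+w^2) := by nlinarith [sq_nonneg c, sq_nonneg w, sq_nonneg (c*w)]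
    calc Real.log (2 + (c*w)^2) ≤ Real.log (2 * (1+c^2) * (1+w^2)) :=
          Real.log_le_log (by positivity) hle
      _ = Real.log 2 + Real.log (1+c^2) + Real.log (1+w^2) := by
          rw [Real.log_mul (by positivity) (by positivity),
            Real.log_mul (by positivity) (by positivity)]
  have hc2 : Real.log (1+c^2) ≤ Real.log 2 + 2*(1+|a|)*s/(p-1) := by
    rcases le_or_gt (1+c^2) 2 with h | h
    · have h1 : Real.log (1+c^2) ≤ Real.log 2 := Real.log_le_log (by positivity) h
      have h2 : 0 ≤ 2*(1+|a|)*s/(p-1) := by positivity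
      linarith
    · have h1 : Real.log (1+c^2) ≤ Real.log (2*c^2) := by
        apply Real.log_le_log (by positivity)
        nlinarith
      have h2 : Real.log (2*c^2) = Real.log 2 + 2*Real.log c := by
        rw [Real.log_mul two_ne_zero (by positivity), Real.log_pow]
        push_cast; ring
      have h3 : 2*(1+|a|)*s/(p-1) = 2*((1+|a|)*s/(p-1)) := by ring
      linarith
  have hw2 := log_one_add_sq' w
  have hlog2 : (0:ℝ) < Real.log 2 := Real.log_pos (by norm_num)
  have hK0 : (0:ℝ) < 3*Real.log 2 + 2*(1+|a|)/(p-1) := by positivity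
  have ht : (0:ℝ) ≤ |Real.log w| := abs_nonneg _
  have hB : (0:ℝ) ≤ 2*(1+|a|)/(p-1) := by positivity
  have h4 : 2*(1+|a|)*s/(p-1) = (2*(1+|a|)/(p-1))*s := by ring
  nlinarith [mul_nonneg (sub_nonneg.mpr hs) ht, mul_nonneg (mul_nonneg hK0.le hs0.le) ht,
    mul_pos hK0 hs0, mul_nonneg (mul_nonneg hB hs0.le) ht]

lemma L_lower' (p a : ℝ) (hp : 1 < p) :
    ∃ k > 0, ∀ s ≥ (1:ℝ), ∀ w : ℝ, 0 < w →
      k * s ≤ Real.log (2 + (phi7 p a s * w)^2) * (1 + |Real.log w|) := by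
  have hq : (0:ℝ) < p - 1 := by linarith
  have hlog2 : (0:ℝ) < Real.log 2 := Real.log_pos (by norm_num)
  set k := min (min (1/(2*(p-1))) (Real.log 2/(8*(p-1)))) (Real.log 2/(16*a^2+1)) with hkdef
  have hk1 : k ≤ 1/(2*(p-1)) := le_trans (min_le_left _ _) (min_le_left _ _)
  have hk2 : k ≤ Real.log 2/(8*(p-1)) := le_trans (min_le_left _ _) (min_le_right _ _)
  have hk3 : k ≤ Real.log 2/(16*a^2+1) := min_le_right _ _
  have hkpos : 0 < k := by
    apply lt_min (lt_min (by positivity) (by positivity)) (by positivity)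
  refine ⟨k, hkpos, ?_⟩
  intro s hs w hw
  have hs0 : 0 < s := lt_of_lt_of_le one_pos hs
  set c := phi7 p a s with hcdef
  have hc : 0 < c := by rw [hcdef]; unfold phi7; positivity
  set L := Real.log (2 + (c*w)^2) with hLdef
  set t := |Real.log w| with htdef
  have ht : 0 ≤ t := abs_nonneg _
  have hL1 : Real.log 2 ≤ L := Real.log_le_log (by norm_num) (by nlinarith [sq_nonneg (c*w)])
  have hLpos : 0 < L := lt_of_lt_of_le hlog2 hL1
  have hL2 : 2*Real.log c + 2*Real.log w ≤ L := by
    have h1 : Real.log ((c*w)^2) ≤ L := by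
      apply Real.log_le_log (by positivity)
      nlinarith
    rw [Real.log_pow, Real.log_mul hc.ne' hw.ne'] at h1
    push_cast at h1
    linarith
  have hls : 0 ≤ Real.log s := Real.log_nonneg hs
  have hals : a * Real.log s ≤ s/2 + 2*a^2 := by
    rcases le_or_gt a 0 with ha | ha
    · nlinarith [mul_nonpos_of_nonpos_of_nonneg ha hls]
    · have h1 : Real.log (s/(2*a)) ≤ s/(2*a) - 1 := Real.log_le_sub_one_of_pos (by positivity)
      rw [Real.log_div hs0.ne' (by positivity)] at h1
      have h2 : Real.log (2*a) ≤ 2*a - 1 := Real.log_le_sub_one_of_pos (by positivity)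
      have h3 : Real.log s ≤ s/(2*a) + 2*a - 2 := by linarith
      have h4 : a * Real.log s ≤ a * (s/(2*a) + 2*a - 2) :=
        mul_le_mul_of_nonneg_left h3 ha.le
      have h5 : a * (s/(2*a) + 2*a - 2) = s/2 + 2*a^2 - 2*a := by field_simp
      nlinarith
  have hT : s - 4*a^2 ≤ (p-1) * (2*Real.log c) := by
    have h0 : Real.log c = s / (p-1) + -(a/(p-1)) * Real.log s := log_phi' p a s hs0
    have h1 : (p-1) * (2*Real.log c) = 2*s - 2*(a*Real.log s) := by
      rw [h0]; field_simp; ring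
    rw [h1]; linarith
  rcases le_or_gt s (2*(s-4*a^2) + 4*(p-1)*Real.log w) with hcase | hcase
  · have hL3 : s/(2*(p-1)) ≤ L := by
      rw [div_le_iff₀ (by positivity)]
      linarith [mul_le_mul_of_nonneg_left hL2 hq.le]
    have hks : k*s ≤ s/(2*(p-1)) := by
      calc k*s ≤ (1/(2*(p-1)))*s := mul_le_mul_of_nonneg_right hk1 hs0.le
        _ = s/(2*(p-1)) := by ring
    linarith [mul_nonneg hLpos.le ht]
  · have hlw : 4*(p-1)*Real.log w < 8*a^2 - s := by linarith
    rcases le_or_gt s (16*a^2+1) with hcs | hcs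
    · have hks : k*(16*a^2+1) ≤ Real.log 2 := by
        rw [← le_div_iff₀ (by positivity)]; exact hk3
      have : k*s ≤ k*(16*a^2+1) := mul_le_mul_of_nonneg_left hcs hkpos.le
      linarith [mul_nonneg hLpos.le ht]
    · have hnl : -Real.log w ≤ t := neg_le_abs _
      have ht8 : s ≤ t * (8*(p-1)) := by
        have h := mul_le_mul_of_nonneg_left hnl (by positivity : (0:ℝ) ≤ 4*(p-1))
        nlinarith [sq_nonneg a]
      have h1 : Real.log 2 * t ≤ L * t := mul_le_mul_of_nonneg_right hL1 ht
      have hks : k*s ≤ (Real.log 2/(8*(p-1)))*s := mul_le_mul_of_nonneg_right hk2 hs0.le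
      have h2 : (Real.log 2/(8*(p-1)))*s ≤ Real.log 2 * t := by
        rw [div_mul_eq_mul_div, div_le_iff₀ (by positivity)]
        linarith [mul_le_mul_of_nonneg_left ht8 hlog2.le]
      linarith [mul_nonneg hLpos.le ht]

lemma pow_le_exp' (b e : ℝ) (hb : 0 ≤ b) (he : 0 < e) :
    ∃ C > 0, ∀ t : ℝ, 0 ≤ t → (1+t)^b ≤ C * Real.exp (e*t) := by
  refine ⟨Real.exp (e + (b+1)*Real.log ((b+1)/e)), Real.exp_pos _, ?_⟩
  intro t ht
  have h1t : (0:ℝ) < 1 + t := by linarith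
  have hb1 : (0:ℝ) < b + 1 := by linarith
  rw [Real.rpow_def_of_pos h1t, ← Real.exp_add, Real.exp_le_exp]
  have hm : (0:ℝ) < (b+1)/e := by positivity
  have h1 : Real.log ((1+t)/((b+1)/e)) ≤ (1+t)/((b+1)/e) - 1 :=
    Real.log_le_sub_one_of_pos (by positivity)
  rw [Real.log_div h1t.ne' hm.ne'] at h1
  have h2 : (1+t)/((b+1)/e) = e*(1+t)/(b+1) := by field_simp
  rw [h2] at h1
  have h4 := mul_le_mul_of_nonneg_left h1 hb1.le
  have h5 : (b+1) * (e*(1+t)/(b+1)) = e*(1+t) := by field_simp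
  have h6 : Real.log (1+t) * b ≤ (b+1) * Real.log (1+t) := by
    nlinarith [Real.log_nonneg (by linarith : (1:ℝ) ≤ 1+t)]
  nlinarith

lemma exp_abs_le' (x e : ℝ) (hx : 0 < x) : Real.exp (e * |Real.log x|) ≤ x ^ e + x ^ (-e) := by
  rcases le_or_gt 1 x with h | h
  · rw [abs_of_nonneg (Real.log_nonneg h), mul_comm, ← Real.rpow_def_of_pos hx]
    have : (0:ℝ) < x ^ (-e) := Real.rpow_pos_of_pos hx _
    linarith
  · rw [abs_of_nonpos (Real.log_nonpos hx.le h.le)]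
    have heq : Real.exp (e * -Real.log x) = x ^ (-e) := by
      rw [Real.rpow_def_of_pos hx]; ring_nf
    rw [heq]
    have : (0:ℝ) < x ^ e := Real.rpow_pos_of_pos hx _
    linarith

lemma exp_neg_abs' (x e : ℝ) (hx : 1 ≤ x) : Real.exp (-(e * |Real.log x|)) = x ^ (-e) := by
  have hx0 : 0 < x := lt_of_lt_of_le one_pos hx
  rw [abs_of_nonneg (Real.log_nonneg hx), Real.rpow_def_of_pos hx0]
  ring_nf

lemma integrand_bounds (p a ε : ℝ) (hp : 1 < p) (hε : 0 < ε) (hε2 : ε < p - 1) :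
    ∃ Cu > 0, ∃ cl > 0, ∀ s ≥ (1:ℝ),
      (∀ w : ℝ, 0 ≤ w →
        |w|^(p-1) * w * (Real.log (2 + (phi7 p a s * w)^2)/s)^a
          ≤ Cu * (w^(p+ε) + w^(p-ε))) ∧
      (∀ w : ℝ, 1 ≤ w →
        cl * w^(p-ε) ≤ |w|^(p-1) * w * (Real.log (2 + (phi7 p a s * w)^2)/s)^a) := by
  have hlog2 : (0:ℝ) < Real.log 2 := Real.log_pos (by norm_num)
  set K := 3*Real.log 2 + 2*(1+|a|)/(p-1) + 2 with hKdef
  have hq' : (0:ℝ) < p - 1 := by linarith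
  have hK : 0 < K := by
    have h1 : 0 ≤ 2*(1+|a|)/(p-1) := div_nonneg (by positivity) hq'.le
    have := hlog2; rw [hKdef]; linarith
  obtain ⟨k, hk, hkb⟩ := L_lower' p a hp
  obtain ⟨C₃, hC₃, hC₃b⟩ := pow_le_exp' |a| ε (abs_nonneg a) hε
  have hKa : (0:ℝ) < K ^ a := Real.rpow_pos_of_pos hK a
  have hka : (0:ℝ) < k ^ a := Real.rpow_pos_of_pos hk a
  refine ⟨(K^a + k^a)*C₃, mul_pos (add_pos hKa hka) hC₃,
    min (k^a/C₃) (K^a/C₃), lt_min (div_pos hka hC₃) (div_pos hKa hC₃), ?_⟩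
  intro s hs
  have hs0 : 0 < s := lt_of_lt_of_le one_pos hs
  -- core two-sided bound on R^a for w > 0
  have hcore : ∀ w : ℝ, 0 < w →
      ((Real.log (2 + (phi7 p a s * w)^2)/s)^a
          ≤ (K^a + k^a)*C₃ * Real.exp (ε * |Real.log w|)) ∧
      (min (k^a/C₃) (K^a/C₃) * Real.exp (-(ε * |Real.log w|))
          ≤ (Real.log (2 + (phi7 p a s * w)^2)/s)^a) := by
    intro w hw
    set t := |Real.log w| with htdef
    have ht : 0 ≤ t := abs_nonneg _
    set L := Real.log (2 + (phi7 p a s * w)^2) with hLdef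
    have hL : 0 < L := log2pos' _
    have h1t : (0:ℝ) < 1 + t := by linarith
    have hRpos : 0 < L/s := div_pos hL hs0
    have hRup : L/s ≤ K*(1+t) := by
      rw [div_le_iff₀ hs0]
      have := L_upper' p a hp s hs w hw
      rw [← hKdef] at this
      calc L ≤ K * s * (1+t) := this
        _ = K*(1+t)*s := by ring
    have hRlow : k/(1+t) ≤ L/s := by
      rw [div_le_div_iff₀ h1t hs0]
      linarith [hkb s hs w hw]
    have hexp : (0:ℝ) < Real.exp (ε*t) := Real.exp_pos _
    have hpow : (1+t)^|a| ≤ C₃ * Real.exp (ε*t) := hC₃b t ht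
    have hpowpos : (0:ℝ) < (1+t)^|a| := Real.rpow_pos_of_pos h1t _
    constructor
    · rcases le_or_gt 0 a with ha | ha
      · have h1 : (L/s)^a ≤ (K*(1+t))^a := Real.rpow_le_rpow hRpos.le hRup ha
        have h2 : (K*(1+t))^a = K^a * (1+t)^a := Real.mul_rpow hK.le h1t.le
        have h3 : (1+t)^a = (1+t)^|a| := by rw [abs_of_nonneg ha]
        have h4 : K^a * (1+t)^|a| ≤ K^a * (C₃ * Real.exp (ε*t)) :=
          mul_le_mul_of_nonneg_left hpow hKa.le
        have h5 : K^a * (C₃ * Real.exp (ε*t)) ≤ (K^a + k^a)*C₃*Real.exp (ε*t) := by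
          nlinarith [mul_pos hC₃ hexp]
        calc (L/s)^a ≤ K^a * (1+t)^|a| := by rw [← h3, ← h2]; exact h1
          _ ≤ K^a * (C₃ * Real.exp (ε*t)) := h4
          _ ≤ _ := h5
      · have h1 : (L/s)^a ≤ (k/(1+t))^a :=
          Real.rpow_le_rpow_of_nonpos (by positivity) hRlow ha.le
        have h2 : (k/(1+t))^a = k^a * (1+t)^|a| := by
          rw [Real.div_rpow hk.le h1t.le, abs_of_neg ha, Real.rpow_neg h1t.le,
            div_eq_mul_inv]
        have h4 : k^a * (1+t)^|a| ≤ k^a * (C₃ * Real.exp (ε*t)) :=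
          mul_le_mul_of_nonneg_left hpow hka.le
        have h5 : k^a * (C₃ * Real.exp (ε*t)) ≤ (K^a + k^a)*C₃*Real.exp (ε*t) := by
          nlinarith [mul_pos hC₃ hexp]
        calc (L/s)^a ≤ k^a * (1+t)^|a| := by rw [← h2]; exact h1
          _ ≤ _ := h4.trans h5
    · have hinv : (C₃ * Real.exp (ε*t))⁻¹ ≤ ((1+t)^|a|)⁻¹ := by
        apply inv_anti₀ hpowpos hpow
      have hexpinv : (C₃ * Real.exp (ε*t))⁻¹ = C₃⁻¹ * Real.exp (-(ε*t)) := by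
        rw [Real.exp_neg]; ring
      rcases le_or_gt 0 a with ha | ha
      · have h1 : (k/(1+t))^a ≤ (L/s)^a := Real.rpow_le_rpow (by positivity) hRlow ha
        have h2 : (k/(1+t))^a = k^a * ((1+t)^|a|)⁻¹ := by
          rw [Real.div_rpow hk.le h1t.le, abs_of_nonneg ha, div_eq_mul_inv]
        have h3 : k^a * (C₃ * Real.exp (ε*t))⁻¹ ≤ k^a * ((1+t)^|a|)⁻¹ :=
          mul_le_mul_of_nonneg_left hinv hka.le
        have h4 : min (k^a/C₃) (K^a/C₃) * Real.exp (-(ε*t)) ≤ k^a * (C₃ * Real.exp (ε*t))⁻¹ := by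
          rw [hexpinv]
          have : min (k^a/C₃) (K^a/C₃) ≤ k^a/C₃ := min_le_left _ _
          have he : (0:ℝ) < Real.exp (-(ε*t)) := Real.exp_pos _
          calc min (k^a/C₃) (K^a/C₃) * Real.exp (-(ε*t)) ≤ (k^a/C₃) * Real.exp (-(ε*t)) :=
                mul_le_mul_of_nonneg_right this he.le
            _ = k^a * (C₃⁻¹ * Real.exp (-(ε*t))) := by ring
        calc min (k^a/C₃) (K^a/C₃) * Real.exp (-(ε*t)) ≤ k^a * (C₃ * Real.exp (ε*t))⁻¹ := h4
          _ ≤ k^a * ((1+t)^|a|)⁻¹ := h3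
          _ = (k/(1+t))^a := h2.symm
          _ ≤ (L/s)^a := h1
      · have h1 : (K*(1+t))^a ≤ (L/s)^a :=
          Real.rpow_le_rpow_of_nonpos hRpos hRup ha.le
        have h2 : (K*(1+t))^a = K^a * ((1+t)^|a|)⁻¹ := by
          rw [Real.mul_rpow hK.le h1t.le, abs_of_neg ha, Real.rpow_neg h1t.le, inv_inv]
        have h3 : K^a * (C₃ * Real.exp (ε*t))⁻¹ ≤ K^a * ((1+t)^|a|)⁻¹ :=
          mul_le_mul_of_nonneg_left hinv hKa.le
        have h4 : min (k^a/C₃) (K^a/C₃) * Real.exp (-(ε*t)) ≤ K^a * (C₃ * Real.exp (ε*t))⁻¹ := by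
          rw [hexpinv]
          have : min (k^a/C₃) (K^a/C₃) ≤ K^a/C₃ := min_le_right _ _
          have he : (0:ℝ) < Real.exp (-(ε*t)) := Real.exp_pos _
          calc min (k^a/C₃) (K^a/C₃) * Real.exp (-(ε*t)) ≤ (K^a/C₃) * Real.exp (-(ε*t)) :=
                mul_le_mul_of_nonneg_right this he.le
            _ = K^a * (C₃⁻¹ * Real.exp (-(ε*t))) := by ring
        calc min (k^a/C₃) (K^a/C₃) * Real.exp (-(ε*t)) ≤ K^a * (C₃ * Real.exp (ε*t))⁻¹ := h4
          _ ≤ K^a * ((1+t)^|a|)⁻¹ := h3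
          _ = (K*(1+t))^a := h2.symm
          _ ≤ (L/s)^a := h1
  constructor
  · intro w hw0
    rcases eq_or_lt_of_le hw0 with heq | hw
    · rw [← heq]
      have e1 : p + ε ≠ 0 := ne_of_gt (by linarith)
      have e2 : p - ε ≠ 0 := ne_of_gt (by linarith)
      simp [Real.zero_rpow e1, Real.zero_rpow e2]
    · have hww : |w|^(p-1) * w = w ^ p := by
        rw [abs_of_pos hw]
        calc w^(p-1) * w = w^(p-1) * w^(1:ℝ) := by rw [Real.rpow_one]
          _ = w^p := by rw [← Real.rpow_add hw]; norm_num
      have h1 := (hcore w hw).1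
      have hwp : (0:ℝ) < w^p := Real.rpow_pos_of_pos hw _
      have h2 : |w|^(p-1) * w * (Real.log (2 + (phi7 p a s * w)^2)/s)^a
          ≤ w^p * ((K^a + k^a)*C₃ * Real.exp (ε * |Real.log w|)) := by
        rw [hww]
        exact mul_le_mul_of_nonneg_left h1 hwp.le
      have h3 : Real.exp (ε * |Real.log w|) ≤ w^ε + w^(-ε) := exp_abs_le' w ε hw
      have h4 : w^p * ((K^a + k^a)*C₃ * Real.exp (ε * |Real.log w|))
          ≤ (K^a + k^a)*C₃ * (w^p * (w^ε + w^(-ε))) := by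
        have := mul_le_mul_of_nonneg_left h3 (by positivity : (0:ℝ) ≤ (K^a+k^a)*C₃ * w^p)
        calc w^p * ((K^a + k^a)*C₃ * Real.exp (ε * |Real.log w|))
            = (K^a+k^a)*C₃*w^p * Real.exp (ε * |Real.log w|) := by ring
          _ ≤ (K^a+k^a)*C₃*w^p * (w^ε + w^(-ε)) := this
          _ = (K^a + k^a)*C₃ * (w^p * (w^ε + w^(-ε))) := by ring
      have h5 : w^p * (w^ε + w^(-ε)) = w^(p+ε) + w^(p-ε) := by
        rw [show p - ε = p + -ε by ring, mul_add, ← Real.rpow_add hw, ← Real.rpow_add hw]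
      rw [h5] at h4
      linarith
  · intro w hw1
    have hw : 0 < w := lt_of_lt_of_le one_pos hw1
    have hww : |w|^(p-1) * w = w ^ p := by
      rw [abs_of_pos hw]
      calc w^(p-1) * w = w^(p-1) * w^(1:ℝ) := by rw [Real.rpow_one]
        _ = w^p := by rw [← Real.rpow_add hw]; norm_num
    have h1 := (hcore w hw).2
    have hwp : (0:ℝ) < w^p := Real.rpow_pos_of_pos hw _
    have h2 := mul_le_mul_of_nonneg_left h1 hwp.le
    rw [exp_neg_abs' w ε hw1] at h2
    have h3 : w^p * (min (k^a/C₃) (K^a/C₃) * w^(-ε)) = min (k^a/C₃) (K^a/C₃) * w^(p-ε) := by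
      rw [show p - ε = p + -ε by ring, Real.rpow_add hw]
      ring
    rw [hww, ← h3]
    exact h2

theorem stmt7 (p a : ℝ) (hp : 1 < p) :
    ∀ ε ∈ Set.Ioo (0:ℝ) (p - 1), ∃ C > 0, ∀ s ≥ (1:ℝ), ∀ z : ℝ,
      (Real.exp (-((p + 1) * s) / (p - 1)) * s ^ (2 * a / (p - 1)) *
          F7 p a (phi7 p a s * z) ≤ C + C * |z| ^ (p + 1 + ε)) ∧
      (|z| ^ (p + 1 - ε)
        ≤ C * (Real.exp (-((p + 1) * s) / (p - 1)) * s ^ (2 * a / (p - 1)) *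
            F7 p a (phi7 p a s * z)) + C) := by
  rintro ε ⟨hε0, hε1⟩
  obtain ⟨Cu, hCu, cl, hcl, hbounds⟩ := integrand_bounds p a ε hp hε0 hε1
  set C := max (max (2*Cu + 1) ((p+1-ε)/cl + 1)) 1 with hC
  have hC1 : (1:ℝ) ≤ C := le_max_right _ _
  have hC2 : 2*Cu + 1 ≤ C := le_trans (le_max_left _ _) (le_max_left _ _)
  have hC3 : (p+1-ε)/cl + 1 ≤ C := le_trans (le_max_right _ _) (le_max_left _ _)
  have hCpos : 0 < C := lt_of_lt_of_le one_pos hC1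
  refine ⟨C, hCpos, ?_⟩
  intro s hs z
  have hs0 : 0 < s := lt_of_lt_of_le one_pos hs
  obtain ⟨hup, hlo⟩ := hbounds s hs
  set Z := |z| with hZdef
  have hZ0 : (0:ℝ) ≤ Z := abs_nonneg z
  have hFeq : F7 p a (phi7 p a s * z) = F7 p a (phi7 p a s * Z) := by
    rcases abs_cases z with ⟨h1, _⟩ | ⟨h1, _⟩
    · rw [hZdef, h1]
    · rw [hZdef, h1, mul_neg, F7_even']
  have hkey := key_id' p a hp s hs Z
  set G := fun w : ℝ => |w| ^ (p-1) * w * (Real.log (2 + (phi7 p a s * w)^2) / s) ^ a with hGdef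
  have hGcont : Continuous G := by
    rw [hGdef]
    have h1 : Continuous fun w : ℝ => |w| ^ (p-1) :=
      continuous_abs.rpow_const (fun w => Or.inr (by linarith))
    have hb : Continuous fun w : ℝ => Real.log (2 + (phi7 p a s * w)^2) / s := by
      apply Continuous.div_const
      apply Continuous.log (by continuity)
      intro w; positivity
    have h2 : Continuous fun w : ℝ => (Real.log (2 + (phi7 p a s * w)^2) / s) ^ a := by
      apply hb.rpow_const
      intro w; left
      exact ne_of_gt (div_pos (log2pos' _) hs0)
    exact (h1.mul continuous_id).mul h2
  have hGint : ∀ u v : ℝ, IntervalIntegrable G volume u v :=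
    fun u v => hGcont.intervalIntegrable u v
  have hGnn : ∀ w : ℝ, 0 ≤ w → 0 ≤ G w := by
    intro w hw
    rw [hGdef]
    exact mul_nonneg (mul_nonneg (Real.rpow_nonneg (abs_nonneg w) _) hw)
      (Real.rpow_nonneg (div_pos (log2pos' _) hs0).le _)
  have hInn : 0 ≤ ∫ w in (0:ℝ)..Z, G w :=
    intervalIntegral.integral_nonneg hZ0 (fun w hw => hGnn w hw.1)
  have hpε : (0:ℝ) < p + ε := by linarith
  have hpmε : (0:ℝ) < p - ε := by linarith
  have hcont1 : Continuous fun w : ℝ => w ^ (p+ε) :=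
    continuous_id.rpow_const (fun w => Or.inr hpε.le)
  have hcont2 : Continuous fun w : ℝ => w ^ (p-ε) :=
    continuous_id.rpow_const (fun w => Or.inr hpmε.le)
  rw [hFeq, hkey]
  show (∫ w in (0:ℝ)..Z, G w) ≤ C + C * Z ^ (p + 1 + ε) ∧
    Z ^ (p + 1 - ε) ≤ C * (∫ w in (0:ℝ)..Z, G w) + C
  constructor
  · -- upper bound
    have h1 : (∫ w in (0:ℝ)..Z, G w) ≤ ∫ w in (0:ℝ)..Z, Cu * (w^(p+ε) + w^(p-ε)) := by
      apply intervalIntegral.integral_mono_on hZ0 (hGint 0 Z)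
      · exact ((continuous_const.mul (hcont1.add hcont2)).intervalIntegrable 0 Z)
      · intro w hw
        exact hup w hw.1
    have h2 : (∫ w in (0:ℝ)..Z, Cu * (w^(p+ε) + w^(p-ε)))
        = Cu * (Z^(p+1+ε)/(p+1+ε) + Z^(p+1-ε)/(p+1-ε)) := by
      rw [intervalIntegral.integral_const_mul,
        intervalIntegral.integral_add (hcont1.intervalIntegrable 0 Z) (hcont2.intervalIntegrable 0 Z),
        integral_rpow (Or.inl (by linarith)), integral_rpow (Or.inl (by linarith)),
        Real.zero_rpow (by positivity : p+ε+1 ≠ 0), Real.zero_rpow (ne_of_gt (by linarith : (0:ℝ) < p-ε+1)),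
        show p+ε+1 = p+1+ε by ring, show p-ε+1 = p+1-ε by ring]
      ring
    have h3 : Z^(p+1+ε)/(p+1+ε) ≤ Z^(p+1+ε) :=
      div_le_self (Real.rpow_nonneg hZ0 _) (by linarith)
    have h4 : Z^(p+1-ε)/(p+1-ε) ≤ Z^(p+1-ε) :=
      div_le_self (Real.rpow_nonneg hZ0 _) (by linarith)
    have h5 : Z^(p+1-ε) ≤ 1 + Z^(p+1+ε) := by
      rcases le_or_gt Z 1 with h | h
      · have := Real.rpow_le_one hZ0 h (by linarith : (0:ℝ) ≤ p+1-ε)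
        have := Real.rpow_nonneg hZ0 (p+1+ε)
        linarith
      · have := Real.rpow_le_rpow_of_exponent_le h.le (by linarith : p+1-ε ≤ p+1+ε)
        have := Real.rpow_nonneg hZ0 (p+1+ε)
        linarith
    have h6 : Cu * (Z^(p+1+ε)/(p+1+ε) + Z^(p+1-ε)/(p+1-ε)) ≤ Cu * (2*Z^(p+1+ε) + 1) := by
      apply mul_le_mul_of_nonneg_left _ hCu.le
      linarith
    have h7 : Cu * (2*Z^(p+1+ε) + 1) ≤ C + C * Z^(p+1+ε) := by
      have hz := Real.rpow_nonneg hZ0 (p+1+ε)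
      nlinarith
    linarith
  · -- lower bound
    rcases le_or_gt Z 1 with hZ1 | hZ1
    · have h1 : Z^(p+1-ε) ≤ 1 := Real.rpow_le_one hZ0 hZ1 (by linarith)
      have h2 : 0 ≤ C * ∫ w in (0:ℝ)..Z, G w := mul_nonneg hCpos.le hInn
      linarith
    · have hsplit : (∫ w in (0:ℝ)..Z, G w)
          = (∫ w in (0:ℝ)..1, G w) + ∫ w in (1:ℝ)..Z, G w :=
        (intervalIntegral.integral_add_adjacent_intervals (hGint 0 1) (hGint 1 Z)).symm
      have h01 : 0 ≤ ∫ w in (0:ℝ)..1, G w :=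
        intervalIntegral.integral_nonneg zero_le_one (fun w hw => hGnn w hw.1)
      have h1Z : (∫ w in (1:ℝ)..Z, cl * w^(p-ε)) ≤ ∫ w in (1:ℝ)..Z, G w := by
        apply intervalIntegral.integral_mono_on hZ1.le
          ((continuous_const.mul hcont2).intervalIntegrable 1 Z) (hGint 1 Z)
        intro w hw
        exact hlo w hw.1
      have hcomp : (∫ w in (1:ℝ)..Z, cl * w^(p-ε)) = cl * ((Z^(p+1-ε) - 1)/(p+1-ε)) := by
        rw [intervalIntegral.integral_const_mul, integral_rpow (Or.inl (by linarith)),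
          Real.one_rpow, show p-ε+1 = p+1-ε by ring]
      have hIlow : cl * ((Z^(p+1-ε) - 1)/(p+1-ε)) ≤ ∫ w in (0:ℝ)..Z, G w := by
        rw [hsplit, ← hcomp]; linarith
      have hfrac : Z^(p+1-ε) - 1 ≤ (p+1-ε)/cl * ∫ w in (0:ℝ)..Z, G w := by
        have heq : (p+1-ε)/cl * (cl * ((Z^(p+1-ε) - 1)/(p+1-ε))) = Z^(p+1-ε) - 1 := by
          have e1 : ((p:ℝ)+1-ε) ≠ 0 := ne_of_gt (by linarith)
          have step : (p+1-ε)/cl * (cl * ((Z^(p+1-ε) - 1)/(p+1-ε)))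
              = ((p+1-ε)/(p+1-ε)) * (cl/cl) * (Z^(p+1-ε) - 1) := by ring
          rw [step, div_self e1, div_self hcl.ne', one_mul, one_mul]
        rw [← heq]
        exact mul_le_mul_of_nonneg_left hIlow (div_nonneg (by linarith) hcl.le)
      have hCI : (p+1-ε)/cl * (∫ w in (0:ℝ)..Z, G w) ≤ C * ∫ w in (0:ℝ)..Z, G w := by
        apply mul_le_mul_of_nonneg_right _ hInn
        linarith
      linarith
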